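/- arXiv:1612.09554 — 2 statements merged into one kernel-verified Lean document; each statement's English description precedes it below -/
import Mathlib

section
/- If H is a prime graph (it contains no homogeneous set A with 1 < |A| ≤ |V(H)| − 1) and φ : V(H) → V(G) is a folding of H into a graph G, then either φ is constant (maps all vertices to a single vertex), or φ is injective. -/
/-- A set `A` is homogeneous in `H` if every vertex outside of `A` is adjacent to all
vertices of `A` or to none of them. -/
def IsHomogeneousSet {V : Type*} (H : SimpleGraph V) (A : Set V) : Prop :=
  ∀ w ∉ A, (∀ a ∈ A, H.Adj w a) ∨ (∀ a ∈ A, ¬ H.Adj w a)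

/-- A finite graph is prime if it has no homogeneous set `A` with `1 < |A| ≤ |V| - 1`. -/
def IsPrimeGraph {V : Type*} [Fintype V] (H : SimpleGraph V) : Prop :=
  ¬ ∃ A : Finset V, 1 < A.card ∧ A.card ≤ Fintype.card V - 1 ∧
      IsHomogeneousSet H (A : Set V)

/-- `φ` is a folding of `H` into `G`. -/
def IsFolding {V W : Type*} (H : SimpleGraph V) (G : SimpleGraph W) (φ : V → W) : Prop :=
  ∀ u v : V, φ u = φ v ∨ (H.Adj u v ↔ G.Adj (φ u) (φ v))

theorem prime_folding_const_or_injective {V W : Type*} [Fintype V]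
    (H : SimpleGraph V) (G : SimpleGraph W) (hH : IsPrimeGraph H)
    (φ : V → W) (hφ : IsFolding H G φ) :
    (∃ w : W, ∀ v : V, φ v = w) ∨ Function.Injective φ := by
  classical
  by_cases hinj : Function.Injective φ
  · exact Or.inr hinj
  left
  obtain ⟨u, v, huv, hne⟩ : ∃ u v, φ u = φ v ∧ u ≠ v := by
    simp only [Function.Injective, not_forall] at hinj
    obtain ⟨u, v, h1, h2⟩ := hinj
    exact ⟨u, v, h1, h2⟩
  refine ⟨φ u, fun x => ?_⟩
  by_contra hx
  apply hH
  set A : Finset V := Finset.univ.filter (fun a => φ a = φ u) with hA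
  have hu : u ∈ A := by simp [hA]
  have hv : v ∈ A := by simp [hA, huv.symm]
  have hxA : x ∉ A := by simp [hA, hx]
  refine ⟨A, ?_, ?_, ?_⟩
  · exact Finset.one_lt_card.mpr ⟨u, hu, v, hv, hne⟩
  · have hsub : A ⊆ Finset.univ.erase x := fun a ha =>
      Finset.mem_erase.mpr ⟨fun h => hxA (h ▸ ha), Finset.mem_univ a⟩
    calc A.card ≤ (Finset.univ.erase x).card := Finset.card_le_card hsub
      _ = Fintype.card V - 1 := by rw [Finset.card_erase_of_mem (Finset.mem_univ x),
            Finset.card_univ]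
  · intro w hw
    have hwφ : φ w ≠ φ u := by simpa [hA] using hw
    have key : ∀ a ∈ (A : Set V), (H.Adj w a ↔ G.Adj (φ w) (φ u)) := by
      intro a ha
      have haφ : φ a = φ u := by simpa [hA] using ha
      rcases hφ w a with h | h
      · exact absurd (h.trans haφ) hwφ
      · rw [h, haφ]
    by_cases hG : G.Adj (φ w) (φ u)
    · exact Or.inl fun a ha => (key a ha).mpr hG
    · exact Or.inr fun a ha => fun h => hG ((key a ha).mp h)
end

section
/- Let γ ∈ (1/2, 1). Define h : [0,1] → ℝ on binary expansions by: for λ = Σ_{i∈T} 2^{−i} with T ⊆ ℕ, set h(λ) = inf over valid expansions T of Σ_{i∈T} γ^{i−1}. Then for every x in [0,1], limsup_{δ→0} |h(x+δ) − h(x)|/|δ| = +∞; in particular h is nowhere differentiable on [0,1]. -/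
open Set

/-- `λ(T) = Σ_{i ∈ T} 2^{-i}`, where `T ⊆ ℕ` encodes a set of positive integers
via the shift `i ↦ i + 1`. -/
noncomputable def lamOf (T : Set ℕ) : ℝ :=
  ∑' i : ℕ, T.indicator (fun i => (2 : ℝ)⁻¹ ^ (i + 1)) i

/-- `h(λ)` is the infimum of `Σ_{i ∈ T} γ^{i-1}` over valid binary expansions `T` of `λ`. -/
noncomputable def hFun (γ : ℝ) (x : ℝ) : ℝ :=
  sInf {s : ℝ | ∃ T : Set ℕ, lamOf T = x ∧ s = ∑' i : ℕ, T.indicator (fun i => γ ^ i) i}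


/-!
Let `T` be a binary expansion of `x` that does not end in `0111…`. Any other expansion `S` of
`x` first differs from `T` at a digit `m` where `T` reads `1000…` and `S` reads `0111…`, and
the tail of `S` costs `γ^{m+1}/(1-γ) ≥ γ^m`, the cost of the digit `m` of `T`, because
`γ > 1/2`. Hence `h(x) = Σ_{i∈T} γ^i`. Such expansions stay such when a digit is added, so
toggling the digit `n` of `T` moves `x` by `2^{-(n+1)}` and `h` by at least `γ^n`: the
difference quotients of `h` at `x` grow like `(2γ)^n`.
-/

open Filter

noncomputable def weightSum (w : ℕ → ℝ) (T : Set ℕ) : ℝ := ∑' i, T.indicator w i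

section weightSum

variable {w : ℕ → ℝ} {S T : Set ℕ}

theorem weightSum_union (hw : Summable w) (h : Disjoint S T) :
    weightSum w (S ∪ T) = weightSum w S + weightSum w T := by
  rw [weightSum, indicator_union_of_disjoint h, (hw.indicator S).tsum_add (hw.indicator T)]
  rfl

theorem weightSum_singleton (n : ℕ) : weightSum w {n} = w n := by
  classical
  simp [weightSum, indicator_singleton]

theorem weightSum_insert (hw : Summable w) {n : ℕ} (hn : n ∉ T) :
    weightSum w (insert n T) = weightSum w T + w n := by
  rw [insert_eq, union_comm, weightSum_union hw (disjoint_singleton_right.2 hn),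
    weightSum_singleton]

theorem weightSum_eq_diff_singleton_add (hw : Summable w) {n : ℕ} (hn : n ∈ T) :
    weightSum w T = weightSum w (T \ {n}) + w n := by
  rw [← weightSum_insert hw fun h => h.2 rfl, insert_sdiff_singleton, insert_eq_of_mem hn]

theorem weightSum_nonneg (hw : ∀ i, 0 ≤ w i) (T : Set ℕ) : 0 ≤ weightSum w T :=
  tsum_nonneg (indicator_nonneg fun i _ => hw i)

theorem weightSum_eq_add_diff (hw : Summable w) (h : S ⊆ T) :
    weightSum w T = weightSum w S + weightSum w (T \ S) := by
  rw [← weightSum_union hw disjoint_sdiff_right, union_sdiff_cancel h]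

theorem weightSum_mono (hw : Summable w) (hw0 : ∀ i, 0 ≤ w i) (h : S ⊆ T) :
    weightSum w S ≤ weightSum w T := by
  rw [weightSum_eq_add_diff hw h]
  linarith [weightSum_nonneg hw0 (T \ S)]

theorem weightSum_lt_of_ssubset (hw : Summable w) (hw0 : ∀ i, 0 < w i) (h : S ⊂ T) :
    weightSum w S < weightSum w T := by
  obtain ⟨i, hiT, hiS⟩ := (ssubset_iff_exists.1 h).2
  have : 0 < weightSum w (T \ S) :=
    (hw.indicator _).tsum_pos (indicator_nonneg fun j _ => (hw0 j).le) i
      (by rw [indicator_of_mem (show i ∈ T \ S from ⟨hiT, hiS⟩)]; exact hw0 i)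
  rw [weightSum_eq_add_diff hw h.subset]
  linarith

theorem weightSum_univ : weightSum w univ = ∑' i, w i := by
  simp [weightSum]

theorem weightSum_Ioi (hw : Summable w) (m : ℕ) :
    weightSum w (Ioi m) = ∑' i, w (i + (m + 1)) := by
  rw [weightSum, ← (hw.indicator _).sum_add_tsum_nat_add (m + 1), Finset.sum_eq_zero, zero_add]
  · exact tsum_congr fun i => indicator_of_mem (by simp; omega) w
  · intro i hi
    exact indicator_of_notMem (by simp at hi ⊢; omega) w

end weightSum

theorem weightSum_pow_Ioi {r : ℝ} (hr0 : 0 ≤ r) (hr1 : r < 1) (k m : ℕ) :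
    weightSum (fun i => r ^ (i + k)) (Ioi m) = r ^ (m + 1 + k) / (1 - r) := by
  have hs : Summable fun i => r ^ (i + k) := by
    simpa only [pow_add] using (summable_geometric_of_lt_one hr0 hr1).mul_right (r ^ k)
  rw [weightSum_Ioi hs]
  have e : ∀ i, r ^ (i + (m + 1) + k) = r ^ i * r ^ (m + 1 + k) := fun i => by
    rw [← pow_add]; ring_nf
  rw [tsum_congr e, tsum_mul_right, tsum_geometric_of_lt_one hr0 hr1, div_eq_inv_mul, mul_comm]

theorem summable_inv_two_pow_succ : Summable fun i : ℕ => (2 : ℝ)⁻¹ ^ (i + 1) :=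
  (summable_nat_add_iff 1).2 (summable_geometric_of_lt_one (by norm_num) (by norm_num))

theorem lamOf_eq_weightSum (T : Set ℕ) :
    lamOf T = weightSum (fun i => (2 : ℝ)⁻¹ ^ (i + 1)) T := rfl

theorem lamOf_insert {T : Set ℕ} {n : ℕ} (hn : n ∉ T) :
    lamOf (insert n T) = lamOf T + 2⁻¹ ^ (n + 1) :=
  weightSum_insert summable_inv_two_pow_succ hn

theorem lamOf_eq_diff_singleton_add {T : Set ℕ} {n : ℕ} (hn : n ∈ T) :
    lamOf T = lamOf (T \ {n}) + 2⁻¹ ^ (n + 1) :=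
  weightSum_eq_diff_singleton_add summable_inv_two_pow_succ hn

theorem lamOf_union {S T : Set ℕ} (h : Disjoint S T) : lamOf (S ∪ T) = lamOf S + lamOf T :=
  weightSum_union summable_inv_two_pow_succ h

theorem lamOf_Ioi (m : ℕ) : lamOf (Ioi m) = 2⁻¹ ^ (m + 1) := by
  rw [lamOf_eq_weightSum, weightSum_pow_Ioi (by norm_num) (by norm_num)]
  ring

theorem lamOf_univ : lamOf univ = 1 := by
  rw [lamOf_eq_weightSum, weightSum_univ]
  simp_rw [pow_succ]
  rw [tsum_mul_right, tsum_geometric_inv_two]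
  norm_num

theorem lamOf_mono {S T : Set ℕ} (h : S ⊆ T) : lamOf S ≤ lamOf T :=
  weightSum_mono summable_inv_two_pow_succ (fun _ => by positivity) h

theorem lamOf_lt_of_ssubset {S T : Set ℕ} (h : S ⊂ T) : lamOf S < lamOf T :=
  weightSum_lt_of_ssubset summable_inv_two_pow_succ (fun _ => by positivity) h

theorem lamOf_mem_Icc (T : Set ℕ) : lamOf T ∈ Icc 0 1 :=
  ⟨weightSum_nonneg (fun _ => by positivity) T, lamOf_univ ▸ lamOf_mono (subset_univ T)⟩

-- `0.p₀…pₘ₋₁1000… = 0.p₀…pₘ₋₁0111…` in binary.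
theorem lamOf_insert_eq_lamOf_union_Ioi {P : Set ℕ} {m : ℕ} (hP : P ⊆ Iio m) :
    lamOf (insert m P) = lamOf (P ∪ Ioi m) := by
  rw [lamOf_insert fun h => lt_irrefl m (hP h), lamOf_union, lamOf_Ioi]
  exact disjoint_of_subset_left hP Ioi_disjoint_Iio_same.symm

theorem exists_inter_Iio_eq_of_ne {S T : Set ℕ} (h : S ≠ T) :
    ∃ m, S ∩ Iio m = T ∩ Iio m ∧ (m ∈ S ∧ m ∉ T ∨ m ∈ T ∧ m ∉ S) := by
  classical
  have hex : ∃ m, ¬(m ∈ S ↔ m ∈ T) := by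
    by_contra! h'
    exact h (ext h')
  refine ⟨Nat.find hex, ?_, by have := Nat.find_spec hex; tauto⟩
  ext i
  simp only [mem_inter_iff, mem_Iio, and_congr_left_iff]
  exact fun hi => not_not.1 (Nat.find_min hex hi)

theorem subset_Iic_and_Ioi_subset_of_lamOf_eq {S T : Set ℕ} {m : ℕ}
    (hST : S ∩ Iio m = T ∩ Iio m) (hmS : m ∈ S) (hmT : m ∉ T) (h : lamOf S = lamOf T) :
    S ⊆ Iic m ∧ Ioi m ⊆ T := by
  set P := S ∩ Iio m
  have hA : insert m P ⊆ S := insert_subset hmS inter_subset_left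
  have hB : T ⊆ P ∪ Ioi m := by
    intro i hi
    rcases lt_trichotomy i m with hlt | rfl | hgt
    · exact Or.inl (hST ▸ ⟨hi, hlt⟩)
    · exact absurd hi hmT
    · exact Or.inr hgt
  have hAB := lamOf_insert_eq_lamOf_union_Ioi (inter_subset_right : P ⊆ Iio m)
  obtain hAS | hAS := hA.eq_or_ssubset
  swap
  · linarith [lamOf_lt_of_ssubset hAS, lamOf_mono hB]
  obtain hTB | hTB := hB.eq_or_ssubset
  swap
  · linarith [lamOf_lt_of_ssubset hTB, lamOf_mono hA]
  exact ⟨hAS ▸ insert_subset self_mem_Iic (inter_subset_right.trans Iio_subset_Iic_self),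
    hTB ▸ subset_union_right⟩

theorem exists_lamOf_eq {x : ℝ} (hx : x ∈ Icc 0 1) : ∃ T, lamOf T = x := by
  obtain ⟨d, -, rfl⟩ := Real.ofDigits_SurjOn (b := 2) one_lt_two hx
  refine ⟨{i | d i = 1}, tsum_congr fun i => ?_⟩
  simp only [Real.ofDigitsTerm, indicator, mem_ofPred_eq]
  generalize d i = b
  fin_cases b <;> simp [inv_pow]

/-- The binary expansion `T` does not end in `0111…`. -/
def NoLastGap (T : Set ℕ) : Prop := ∀ m ∉ T, ∃ i, m < i ∧ i ∉ T

theorem noLastGap_of_subset_Iic {T : Set ℕ} {m : ℕ} (h : T ⊆ Iic m) : NoLastGap T :=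
  fun j _ => ⟨max j m + 1, by omega, fun hi => absurd (mem_Iic.1 (h hi)) (by omega)⟩

theorem NoLastGap.insert {T : Set ℕ} (hT : NoLastGap T) (n : ℕ) : NoLastGap (insert n T) := by
  intro m hm
  rw [mem_insert_iff, not_or] at hm
  obtain ⟨i, hmi, hiT⟩ := hT m hm.2
  by_cases hin : i = n
  · obtain ⟨j, hij, hjT⟩ := hT i hiT
    exact ⟨j, hmi.trans hij, by rw [mem_insert_iff, not_or]; exact ⟨by omega, hjT⟩⟩
  · exact ⟨i, hmi, by rw [mem_insert_iff, not_or]; exact ⟨hin, hiT⟩⟩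

theorem exists_noLastGap_lamOf_eq {x : ℝ} (hx : x ∈ Icc 0 1) :
    ∃ T, NoLastGap T ∧ lamOf T = x := by
  obtain ⟨T, rfl⟩ := exists_lamOf_eq hx
  by_cases hT : NoLastGap T
  · exact ⟨T, hT, rfl⟩
  simp only [NoLastGap, not_forall, not_exists, not_and, not_not] at hT
  obtain ⟨m, hmT, htail⟩ := hT
  have hT : T = T ∩ Iio m ∪ Ioi m := by
    ext i
    rcases lt_trichotomy i m with hlt | rfl | hgt
    · simp [hlt, hlt.asymm]
    · simp [hmT]
    · simp [hgt, htail i hgt]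
  refine ⟨insert m (T ∩ Iio m), noLastGap_of_subset_Iic (m := m) ?_, ?_⟩
  · exact insert_subset self_mem_Iic (inter_subset_right.trans Iio_subset_Iic_self)
  · rw [lamOf_insert_eq_lamOf_union_Ioi inter_subset_right, ← hT]

section hFun

variable {γ : ℝ}

theorem weightSum_pow_le_of_lamOf_eq (hγ : 1 / 2 < γ) (hγ1 : γ < 1) {S T : Set ℕ}
    (hT : NoLastGap T) (h : lamOf T = lamOf S) :
    weightSum (fun i => γ ^ i) T ≤ weightSum (fun i => γ ^ i) S := by
  have hγ0 : 0 < γ := by linarith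
  have hw : Summable fun i => γ ^ i := summable_geometric_of_lt_one hγ0.le hγ1
  have hmono {A B : Set ℕ} (hAB : A ⊆ B) := weightSum_mono hw (fun i => (pow_pos hγ0 i).le) hAB
  obtain rfl | hne := eq_or_ne T S
  · rfl
  obtain ⟨m, hTS, ⟨hmT, hmS⟩ | ⟨hmS, hmT⟩⟩ := exists_inter_Iio_eq_of_ne hne
  · obtain ⟨hTm, hmS'⟩ := subset_Iic_and_Ioi_subset_of_lamOf_eq hTS hmT hmS h
    set P := T ∩ Iio m
    have hTP : T ⊆ insert m P := fun i hi => (eq_or_lt_of_le (hTm hi)).imp id fun h => ⟨hi, h⟩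
    have hdigit : γ ^ m ≤ γ ^ (m + 1) / (1 - γ) := by
      rw [le_div_iff₀ (by linarith), pow_succ]
      nlinarith [pow_pos hγ0 m]
    calc weightSum _ T ≤ weightSum _ (insert m P) := hmono hTP
      _ = weightSum _ P + γ ^ m := weightSum_insert hw fun h => lt_irrefl m h.2
      _ ≤ weightSum _ P + γ ^ (m + 1) / (1 - γ) := by gcongr
      _ = weightSum _ (P ∪ Ioi m) := by
        have hIoi : weightSum (fun i => γ ^ i) (Ioi m) = γ ^ (m + 1) / (1 - γ) := by
          simpa using weightSum_pow_Ioi hγ0.le hγ1 0 m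
        rw [weightSum_union hw (disjoint_of_subset_left inter_subset_right
          Ioi_disjoint_Iio_same.symm), hIoi]
      _ ≤ weightSum _ S := hmono (union_subset (hTS ▸ inter_subset_left) hmS')
  · obtain ⟨i, hmi, hiT⟩ := hT m hmT
    exact absurd ((subset_Iic_and_Ioi_subset_of_lamOf_eq hTS.symm hmS hmT h.symm).2 hmi) hiT

theorem hFun_lamOf (hγ : 1 / 2 < γ) (hγ1 : γ < 1) {T : Set ℕ} (hT : NoLastGap T) :
    hFun γ (lamOf T) = weightSum (fun i => γ ^ i) T :=
  IsLeast.csInf_eq ⟨⟨T, rfl, rfl⟩, by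
    rintro _ ⟨S, hS, rfl⟩
    exact weightSum_pow_le_of_lamOf_eq hγ hγ1 hT hS.symm⟩

theorem hFun_lamOf_le (hγ : 0 ≤ γ) (T : Set ℕ) :
    hFun γ (lamOf T) ≤ weightSum (fun i => γ ^ i) T :=
  csInf_le ⟨0, by
    rintro _ ⟨S, -, rfl⟩
    exact weightSum_nonneg (fun i => pow_nonneg hγ i) S⟩ ⟨T, rfl, rfl⟩

theorem pow_le_hFun_lamOf_sub (hγ : 1 / 2 < γ) (hγ1 : γ < 1) {T : Set ℕ} (hT : NoLastGap T)
    {n : ℕ} (hn : n ∈ T) : γ ^ n ≤ hFun γ (lamOf T) - hFun γ (lamOf (T \ {n})) := by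
  have hγ0 : 0 < γ := by linarith
  have hsum := weightSum_eq_diff_singleton_add (summable_geometric_of_lt_one hγ0.le hγ1) hn
  linarith [hFun_lamOf hγ hγ1 hT, hFun_lamOf_le hγ0.le (T \ {n})]

theorem exists_pow_le_abs_hFun_sub (hγ : 1 / 2 < γ) (hγ1 : γ < 1) {x : ℝ} (hx : x ∈ Icc 0 1)
    (n : ℕ) : ∃ δ : ℝ, δ ≠ 0 ∧ |δ| ≤ 2⁻¹ ^ n ∧ x + δ ∈ Icc 0 1 ∧
      γ ^ n ≤ |hFun γ (x + δ) - hFun γ x| := by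
  obtain ⟨T, hT, rfl⟩ := exists_noLastGap_lamOf_eq hx
  have hpos : (0 : ℝ) < 2⁻¹ ^ (n + 1) := by positivity
  have hle : (2 : ℝ)⁻¹ ^ (n + 1) ≤ 2⁻¹ ^ n :=
    pow_le_pow_of_le_one (by norm_num) (by norm_num) n.le_succ
  by_cases hn : n ∈ T
  · have hlam : lamOf T + -2⁻¹ ^ (n + 1) = lamOf (T \ {n}) := by
      rw [lamOf_eq_diff_singleton_add hn]; ring
    refine ⟨-2⁻¹ ^ (n + 1), by linarith, by rwa [abs_neg, abs_of_pos hpos], ?_, ?_⟩ <;>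
      rw [hlam]
    · exact lamOf_mem_Icc _
    · rw [abs_sub_comm]
      exact (pow_le_hFun_lamOf_sub hγ hγ1 hT hn).trans (le_abs_self _)
  · have hT' : insert n T \ {n} = T := insert_sdiff_self_of_notMem hn
    have hlam : lamOf T + 2⁻¹ ^ (n + 1) = lamOf (insert n T) := by
      rw [lamOf_eq_diff_singleton_add (mem_insert n T), hT']
    refine ⟨2⁻¹ ^ (n + 1), hpos.ne', by rwa [abs_of_pos hpos], ?_, ?_⟩ <;> rw [hlam]
    · exact lamOf_mem_Icc _
    · have := pow_le_hFun_lamOf_sub hγ hγ1 (hT.insert n) (mem_insert n T)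
      rw [hT'] at this
      exact this.trans (le_abs_self _)

end hFun

section UnboundedSlope

variable {E : Type*} [NormedAddCommGroup E] {f : ℝ → E} {s : Set ℝ} {x : ℝ}

def HasUnboundedSlopeWithin (f : ℝ → E) (s : Set ℝ) (x : ℝ) : Prop :=
  ∀ C : ℝ, 0 < C → ∀ ε : ℝ, 0 < ε → ∃ δ : ℝ, δ ≠ 0 ∧ |δ| < ε ∧
    x + δ ∈ s ∧ C * |δ| < ‖f (x + δ) - f x‖

theorem HasUnboundedSlopeWithin.of_pow_steps {r q : ℝ} (hr0 : 0 < r) (hr1 : r < 1) (hrq : r < q)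
    (h : ∀ n : ℕ, ∃ δ : ℝ, δ ≠ 0 ∧ |δ| ≤ r ^ n ∧ x + δ ∈ s ∧
      q ^ n ≤ ‖f (x + δ) - f x‖) :
    HasUnboundedSlopeWithin f s x := by
  intro C hC ε hε
  have hsmall : ∀ᶠ n : ℕ in atTop, r ^ n < ε :=
    (tendsto_pow_atTop_nhds_zero_of_lt_one hr0.le hr1).eventually (gt_mem_nhds hε)
  have hlarge : ∀ᶠ n : ℕ in atTop, C < (q / r) ^ n :=
    (tendsto_pow_atTop_atTop_of_one_lt ((one_lt_div hr0).2 hrq)).eventually_gt_atTop C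
  obtain ⟨n, hnε, hnC⟩ := (hsmall.and hlarge).exists
  obtain ⟨δ, hδ0, hδr, hδs, hδq⟩ := h n
  refine ⟨δ, hδ0, hδr.trans_lt hnε, hδs, ?_⟩
  calc C * |δ| ≤ C * r ^ n := by gcongr
    _ < (q / r) ^ n * r ^ n := mul_lt_mul_of_pos_right hnC (pow_pos hr0 n)
    _ = q ^ n := by rw [div_pow, div_mul_cancel₀ _ (pow_ne_zero n hr0.ne')]
    _ ≤ ‖f (x + δ) - f x‖ := hδq

theorem HasUnboundedSlopeWithin.not_differentiableWithinAt [NormedSpace ℝ E]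
    (h : HasUnboundedSlopeWithin f s x) :
    ¬DifferentiableWithinAt ℝ f s x := by
  intro hd
  obtain ⟨c, hc⟩ := hd.isBigO_sub.bound
  obtain ⟨ε, hε, hball⟩ := Metric.mem_nhdsWithin_iff.1 hc
  obtain ⟨δ, hδ0, hδε, hδs, hδ⟩ := h (max c 1) (by positivity) ε hε
  have hlip : ‖f (x + δ) - f x‖ ≤ c * |δ| := by
    simpa using hball ⟨by simpa using hδε, hδs⟩
  nlinarith [le_max_left c 1, abs_pos.2 hδ0]

end UnboundedSlope

theorem hFun_nowhere_differentiable (γ : ℝ) (hγ : 1 / 2 < γ) (hγ1 : γ < 1) :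
    ∀ x ∈ Icc (0 : ℝ) 1,
      (∀ C : ℝ, 0 < C → ∀ ε : ℝ, 0 < ε → ∃ δ : ℝ, δ ≠ 0 ∧ |δ| < ε ∧
          x + δ ∈ Icc (0 : ℝ) 1 ∧ C * |δ| < |hFun γ (x + δ) - hFun γ x|) ∧
      ¬ DifferentiableWithinAt ℝ (hFun γ) (Icc (0 : ℝ) 1) x := by
  intro x hx
  have hslope : HasUnboundedSlopeWithin (hFun γ) (Icc 0 1) x :=
    .of_pow_steps (by norm_num) (by norm_num) (by linarith) (exists_pow_le_abs_hFun_sub hγ hγ1 hx)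
  exact ⟨hslope, hslope.not_differentiableWithinAt⟩
end
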